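/- arXiv:2007.14048 — 4 statements merged into one kernel-verified Lean document; each statement's English description precedes it below -/
import Mathlib

section
/- For all real x and all integers n ≥ 1, 3x·(B_{2n+1}(x) − B_{2n−1}(x)) = C_{2n+1}(x) + C_{2n−1}(x). -/
def B (x : ℝ) : ℕ → ℝ
  | 0 => 0
  | 1 => 1
  | n + 2 => 6 * x * B x (n + 1) - B x n

def C (x : ℝ) : ℕ → ℝ
  | 0 => 1
  | 1 => 3 * x
  | n + 2 => 6 * x * C x (n + 1) - C x n

/-
Each Lucas-balancing polynomial is a difference of consecutive balancing polynomials in two ways,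
`C_k = B_{k+1} - 3x B_k` and `C_{k+1} = 3x B_{k+1} - B_k`. Adding the second form at `k + 1` to
the first form at `k` telescopes to `C_{k+2} + C_k = 3x (B_{k+2} - B_k)`; the theorem is the case
`k = 2n - 1`.
-/

theorem C_eq_B_succ_sub (x : ℝ) (n : ℕ) : C x n = B x (n + 1) - 3 * x * B x n := by
  induction n using Nat.twoStepInduction with
  | zero => simp [B, C]
  | one => simp only [B, C]; ring
  | more k ih₀ ih₁ =>
    simp only [C, B] at ih₀ ih₁ ⊢
    linear_combination 6 * x * ih₁ - ih₀

theorem C_succ_eq_B_sub (x : ℝ) (n : ℕ) : C x (n + 1) = 3 * x * B x (n + 1) - B x n := by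
  rw [C_eq_B_succ_sub, B]
  ring

theorem three_mul_B_add_two_sub_B (x : ℝ) (k : ℕ) :
    3 * x * (B x (k + 2) - B x k) = C x (k + 2) + C x k := by
  rw [C_succ_eq_B_sub, C_eq_B_succ_sub]
  ring

theorem stmt1 (x : ℝ) (n : ℕ) (hn : 1 ≤ n) :
    3 * x * (B x (2 * n + 1) - B x (2 * n - 1)) = C x (2 * n + 1) + C x (2 * n - 1) := by
  rw [show 2 * n + 1 = 2 * n - 1 + 2 by omega]
  exact three_mul_B_add_two_sub_B x (2 * n - 1)
end

section
/- For all real x and all integers n ≥ 1, 3x·(B_n(x) − B_{n−1}(x)) = C_{2n−1}(x) − (36x² − 6x − 2)·∑_{k=1}^{n−1} B_k(x)·C_{2(n−k)−1}(x). -/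
open Finset

lemma add_four_of_add_two {R : Type*} [CommRing R] {u : ℕ → R} {a : R}
    (hu : ∀ j, u (j + 2) = a * u (j + 1) - u j) (j : ℕ) :
    u (j + 4) = (a ^ 2 - 2) * u (j + 2) - u j := by
  rw [hu (j + 2), hu (j + 1), hu j]
  ring

namespace Balancing

variable (x : ℝ)

lemma B_add_two (j : ℕ) : B x (j + 2) = 6 * x * B x (j + 1) - B x j := rfl

lemma C_add_two (j : ℕ) : C x (j + 2) = 6 * x * C x (j + 1) - C x j := rfl

lemma C_add_four (j : ℕ) : C x (j + 4) = (36 * x ^ 2 - 2) * C x (j + 2) - C x j := by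
  rw [add_four_of_add_two (C_add_two x) j]
  ring

def oddConv (m : ℕ) : ℝ :=
  ∑ p ∈ antidiagonal m, B x p.1 * C x (2 * p.2 + 1)

lemma oddConv_add_two (m : ℕ) :
    oddConv x (m + 2) =
      (36 * x ^ 2 - 2) * oddConv x (m + 1) - oddConv x m + 3 * x * (B x (m + 2) - B x (m + 1)) := by
  have hshift : ∑ p ∈ antidiagonal m, B x p.1 * C x (2 * p.2 + 3) =
      oddConv x (m + 1) - 3 * x * B x (m + 1) := by
    rw [oddConv, Nat.sum_antidiagonal_succ', mul_zero, zero_add, show C x 1 = 3 * x from rfl]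
    simp only [show ∀ j, 2 * (j + 1) + 1 = 2 * j + 3 by omega]
    ring
  have hC3 : C x 3 = 108 * x ^ 3 - 9 * x := by simp only [C]; ring
  rw [oddConv, Nat.sum_antidiagonal_succ', Nat.sum_antidiagonal_succ']
  simp only [show ∀ j, 2 * (j + 1 + 1) + 1 = 2 * j + 1 + 4 by omega, C_add_four, mul_sub,
    sum_sub_distrib, mul_left_comm _ (36 * x ^ 2 - 2), ← mul_sum]
  rw [hshift, ← oddConv]
  simp only [mul_zero, zero_add, hC3, show C x 1 = 3 * x from rfl]
  ring

lemma mul_oddConv : ∀ m : ℕ,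
    (36 * x ^ 2 - 6 * x - 2) * oddConv x m = C x (2 * m + 1) - 3 * x * (B x (m + 1) - B x m)
  | 0 => by simp [oddConv, B, C]
  | 1 => by simp [oddConv, Nat.sum_antidiagonal_succ, B, C]; ring
  | m + 2 => by
    rw [oddConv_add_two, mul_add, mul_sub, mul_sub, mul_left_comm, mul_oddConv m,
      mul_oddConv (m + 1), show 2 * (m + 2) + 1 = 2 * m + 1 + 4 by ring, C_add_four,
      show 2 * (m + 1) + 1 = 2 * m + 1 + 2 by ring, B_add_two x (m + 1), B_add_two x m]
    ring

lemma sum_Icc_eq_oddConv (m : ℕ) :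
    ∑ k ∈ Icc 1 m, B x k * C x (2 * (m + 1 - k) - 1) = oddConv x m := by
  rw [oddConv, Nat.sum_antidiagonal_eq_sum_range_succ_mk, sum_range_succ',
    ← Ico_add_one_right_eq_Icc, sum_Ico_eq_sum_range]
  simp only [B, zero_mul, add_zero, Nat.add_sub_cancel]
  refine sum_congr rfl fun k hk => ?_
  rw [mem_range] at hk
  rw [add_comm 1 k, show 2 * (m + 1 - (k + 1)) - 1 = 2 * (m - (k + 1)) + 1 by omega]

end Balancing

theorem stmt5 (x : ℝ) (n : ℕ) (hn : 1 ≤ n) :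
    3 * x * (B x n - B x (n - 1)) =
      C x (2 * n - 1) - (36 * x ^ 2 - 6 * x - 2) *
        ∑ k ∈ Finset.Icc 1 (n - 1), B x k * C x (2 * (n - k) - 1) := by
  obtain ⟨m, rfl⟩ := Nat.exists_eq_add_of_le' hn
  rw [Nat.add_sub_cancel, Balancing.sum_Icc_eq_oddConv, Balancing.mul_oddConv,
    show 2 * (m + 1) - 1 = 2 * m + 1 by omega]
  ring
end

section
/- For all real x and all integers n ≥ 1, B_n(x) − (18x² − 1)·B_{n−1}(x) = C_{2(n−1)}(x) − (36x² − 6x − 2)·∑_{k=1}^{n−1} B_k(x)·C_{2(n−k−1)}(x). -/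
open Finset

theorem add_four_of_recurrence {R : Type*} [CommRing R] {u : ℕ → R} {a : R}
    (h : ∀ n, u (n + 2) = a * u (n + 1) - u n) (n : ℕ) :
    u (n + 4) = (a ^ 2 - 2) * u (n + 2) - u n := by
  linear_combination h (n + 2) + a * h (n + 1) + h n

theorem C_add_two (x : ℝ) (n : ℕ) : C x (n + 2) = 6 * x * C x (n + 1) - C x n := rfl

theorem B_add_two (x : ℝ) (n : ℕ) : B x (n + 2) = 6 * x * B x (n + 1) - B x n := rfl

theorem C_two_mul_add_two (x : ℝ) (m : ℕ) :
    C x (2 * (m + 2)) = (36 * x ^ 2 - 2) * C x (2 * (m + 1)) - C x (2 * m) := by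
  rw [show 2 * (m + 2) = 2 * m + 4 by ring, show 2 * (m + 1) = 2 * m + 2 by ring,
    add_four_of_recurrence (C_add_two x)]
  ring

noncomputable def convBC (x : ℝ) (m : ℕ) : ℝ :=
  ∑ k ∈ Icc 1 m, B x k * C x (2 * (m - k))

/-- The correction term comes from the summands `k = m + 1, m + 2`, which the shifted sums miss. -/
theorem convBC_add_two (x : ℝ) (m : ℕ) :
    convBC x (m + 2) = (36 * x ^ 2 - 2) * convBC x (m + 1) - convBC x m
      + (B x (m + 2) - (18 * x ^ 2 - 1) * B x (m + 1)) := by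
  have bulk : ∑ k ∈ Icc 1 m, B x k * C x (2 * (m + 2 - k)) =
      ∑ k ∈ Icc 1 m, ((36 * x ^ 2 - 2) * (B x k * C x (2 * (m + 1 - k)))
        - B x k * C x (2 * (m - k))) := by
    refine sum_congr rfl fun k hk => ?_
    have hkm : k ≤ m := (mem_Icc.mp hk).2
    rw [show m + 2 - k = m - k + 2 by omega, show m + 1 - k = m - k + 1 by omega,
      C_two_mul_add_two]
    ring
  simp only [convBC]
  rw [sum_Icc_succ_top (by omega : 1 ≤ m + 2), sum_Icc_succ_top (by omega : 1 ≤ m + 1),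
    sum_Icc_succ_top (by omega : 1 ≤ m + 1), bulk, sum_sub_distrib, ← mul_sum,
    show m + 2 - (m + 1) = 1 by omega, Nat.sub_self, Nat.sub_self]
  simp only [C, mul_one]
  ring

theorem B_succ_sub_eq_C_sub_convBC (x : ℝ) (m : ℕ) :
    B x (m + 1) - (18 * x ^ 2 - 1) * B x m =
      C x (2 * m) - (36 * x ^ 2 - 6 * x - 2) * convBC x m := by
  induction m using Nat.twoStepInduction with
  | zero => simp [B, C, convBC]
  | one =>
    simp only [convBC, Icc_self, sum_singleton, Nat.sub_self, B, C]
    ring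
  | more m ih ih' =>
    rw [B_add_two x (m + 1), C_two_mul_add_two, convBC_add_two]
    linear_combination (36 * x ^ 2 - 2) * ih' - ih + (1 - 18 * x ^ 2) * B_add_two x m

theorem stmt6 (x : ℝ) (n : ℕ) (hn : 1 ≤ n) :
    B x n - (18 * x ^ 2 - 1) * B x (n - 1) =
      C x (2 * (n - 1)) - (36 * x ^ 2 - 6 * x - 2) *
        ∑ k ∈ Finset.Icc 1 (n - 1), B x k * C x (2 * (n - k - 1)) := by
  obtain ⟨m, rfl⟩ : ∃ m, n = m + 1 := ⟨n - 1, by omega⟩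
  have reindex : ∑ k ∈ Icc 1 m, B x k * C x (2 * (m + 1 - k - 1)) = convBC x m :=
    sum_congr rfl fun k _ => by rw [show m + 1 - k - 1 = m - k by omega]
  rw [Nat.add_sub_cancel, reindex]
  exact B_succ_sub_eq_C_sub_convBC x m
end

section
/- For all integers n ≥ 0, B_n(1/2) = F_{2n}, where F denotes the Fibonacci numbers. -/
theorem Nat.fib_add_four_add_fib (n : ℕ) : fib (n + 4) + fib n = 3 * fib (n + 2) := by
  have h2 : fib (n + 2) = fib n + fib (n + 1) := fib_add_two
  have h3 : fib (n + 3) = fib (n + 1) + fib (n + 2) := fib_add_two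
  have h4 : fib (n + 4) = fib (n + 2) + fib (n + 3) := fib_add_two
  omega

theorem B_half_add_two (n : ℕ) : B (1 / 2) (n + 2) = 3 * B (1 / 2) (n + 1) - B (1 / 2) n := by
  rw [B]
  norm_num

theorem stmt11 (n : ℕ) : B (1 / 2) n = Nat.fib (2 * n) := by
  induction n using Nat.twoStepInduction with
  | zero => simp [B]
  | one => simp [B]
  | more n ih₀ ih₁ =>
    have hfib : (Nat.fib (2 * n + 4) : ℝ) + Nat.fib (2 * n) = 3 * Nat.fib (2 * n + 2) := by
      exact_mod_cast Nat.fib_add_four_add_fib (2 * n)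
    rw [B_half_add_two, ih₀, ih₁, show 2 * (n + 2) = 2 * n + 4 by ring,
      show 2 * (n + 1) = 2 * n + 2 by ring]
    linarith
end
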